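/- Let K be an algebraically closed field, n an even natural number, G an invertible symmetric n×n matrix over K, and A an n×n matrix over K satisfying Aᵀ * G * A = G. Then the number, counted with multiplicity, of roots of the characteristic polynomial of A that are roots of unity is even. -/

import Mathlib

open Polynomial Matrix
open scoped Classical

/-!
From `Aᵀ G A = G` we get `A⁻¹ = G⁻¹ Aᵀ G`, so `A⁻¹` is similar to `Aᵀ` and has the same
characteristic polynomial as `A`. Up to a nonzero constant, `charpoly A⁻¹` is the reverse of
`charpoly A`, whose roots are the inverses of the roots of `charpoly A`. Hence inversion permutes
the `n` roots of `charpoly A`, all nonzero. A root fixed by inversion satisfies `a² = 1`, so the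
roots that are not roots of unity fall into pairs `{a, a⁻¹}`; since `n` is even, so is the number
of the remaining ones.
-/

namespace Multiset

theorem even_card_of_map_eq_self {α : Type*} {f : α → α} (hf : Function.Involutive f)
    {M : Multiset α} (hM : M.map f = M) (hfix : ∀ a ∈ M, f a ≠ a) : Even (card M) := by
  have hcount : ∀ a, M.count (f a) = M.count a := fun a => by
    conv_lhs => rw [← hM]
    exact count_map_eq_count' f M hf.injective a
  have hmem : ∀ a ∈ M.toFinset, f a ∈ M.toFinset := fun a ha => by
    rw [mem_toFinset] at ha ⊢
    rw [← hM]
    exact mem_map_of_mem f ha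
  rw [← ZMod.natCast_eq_zero_iff_even, ← toFinset_sum_count_eq, Nat.cast_sum]
  refine Finset.sum_involution (fun a _ => f a) (fun a _ => ?_)
    (fun a ha _ => hfix a (mem_toFinset.mp ha)) hmem (fun a _ => hf a)
  rw [hcount]
  exact CharTwo.add_self_eq_zero _

theorem even_card_filter_not_isOfFinOrder {G₀ : Type*} [GroupWithZero G₀]
    {M : Multiset G₀} (hM : M.map (·⁻¹) = M) (h0 : 0 ∉ M) :
    Even (card (M.filter fun a => ¬IsOfFinOrder a)) := by
  have hinv : ∀ a : G₀, IsOfFinOrder a⁻¹ ↔ IsOfFinOrder a := fun a => by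
    simp [isOfFinOrder_iff_pow_eq_one, inv_pow]
  refine even_card_of_map_eq_self inv_involutive ?_ fun a ha hfix => ?_
  · conv_rhs => rw [← hM]
    rw [filter_map]
    simp only [Function.comp_def, hinv]
  · obtain ⟨haM, hfin⟩ := mem_filter.mp ha
    have ha0 : a ≠ 0 := ne_of_mem_of_not_mem haM h0
    refine hfin (isOfFinOrder_iff_pow_eq_one.mpr ⟨2, two_pos, ?_⟩)
    rw [sq]
    nth_rewrite 2 [← hfix]
    exact mul_inv_cancel₀ ha0

end Multiset

namespace Polynomial

variable {R : Type*}

theorem reverse_multiset_prod [CommSemiring R] [NoZeroDivisors R] (m : Multiset R[X]) :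
    m.prod.reverse = (m.map reverse).prod := by
  induction m using Multiset.induction with
  | empty => simpa using reverse_C (1 : R)
  | cons p m ih => simp [reverse_mul_of_domain, ih]

theorem reverse_X_sub_C [Field R] {a : R} (ha : a ≠ 0) :
    (X - C a).reverse = C (-a) * (X - C a⁻¹) := by
  have hX : (X : R[X]).reverse = 1 := by
    rw [← mul_one (X : R[X]), reverse_X_mul, ← C_1, reverse_C]
  rw [sub_eq_add_neg, ← C_neg, reverse_add_C, natDegree_X, pow_one, hX, mul_sub, ← C_mul,
    neg_mul, mul_inv_cancel₀ ha, C_neg, C_neg, C_1]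
  ring

theorem roots_reverse [Field R] {p : R[X]} (hp : p.Splits) (hcoeff : p.coeff 0 ≠ 0) :
    p.reverse.roots = p.roots.map (·⁻¹) := by
  have hroots : ∀ a ∈ p.roots, a ≠ 0 := by
    rintro a ha rfl
    exact hcoeff (by simpa [coeff_zero_eq_eval_zero] using isRoot_of_mem_roots ha)
  have hp_ne : p ≠ 0 := by rintro rfl; simp at hcoeff
  have hC : (p.roots.map fun a => C (-a)).prod = C (p.roots.map (-·)).prod := by
    rw [map_multiset_prod, Multiset.map_map]; rfl
  have hX : p.roots.map (fun a => X - C a⁻¹) = (p.roots.map (·⁻¹)).map (X - C ·) := by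
    rw [Multiset.map_map]; rfl
  have hprod : (p.roots.map (-·)).prod ≠ 0 := Multiset.prod_ne_zero fun h => by
    obtain ⟨a, ha, hneg⟩ := Multiset.mem_map.mp h
    exact hroots a ha (neg_eq_zero.mp hneg)
  conv_lhs => rw [hp.eq_prod_roots]
  rw [reverse_mul_of_domain, reverse_C, reverse_multiset_prod, Multiset.map_map,
    Function.comp_def, Multiset.map_congr rfl fun a ha => reverse_X_sub_C (hroots a ha),
    Multiset.prod_map_mul, hC, hX, ← mul_assoc, ← C_mul,
    roots_C_mul _ (mul_ne_zero (leadingCoeff_ne_zero.mpr hp_ne) hprod),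
    roots_multiset_prod_X_sub_C]

end Polynomial

namespace Matrix

variable {n : Type*} [Fintype n] [DecidableEq n]

section CommRing

variable {R : Type*} [CommRing R] {G A : Matrix n n R}

theorem inv_mul_transpose_mul_mul_eq_one (hG : IsUnit G) (hA : Aᵀ * G * A = G) :
    G⁻¹ * Aᵀ * G * A = 1 := by
  rw [Matrix.mul_assoc (G⁻¹ * Aᵀ), Matrix.mul_assoc G⁻¹, ← Matrix.mul_assoc Aᵀ, hA,
    nonsing_inv_mul G ((isUnit_iff_isUnit_det G).mp hG)]

theorem isUnit_of_transpose_mul_mul_eq (hG : IsUnit G) (hA : Aᵀ * G * A = G) : IsUnit A :=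
  (isUnit_iff_isUnit_det A).mpr
    (isUnit_det_of_left_inverse (inv_mul_transpose_mul_mul_eq_one hG hA))

theorem charpoly_inv_eq_charpoly_of_transpose_mul_mul_eq (hG : IsUnit G)
    (hA : Aᵀ * G * A = G) : A⁻¹.charpoly = A.charpoly := by
  rw [inv_eq_left_inv (inv_mul_transpose_mul_mul_eq_one hG hA), ← hG.unit_spec,
    charpoly_units_conj', charpoly_transpose]

end CommRing

theorem roots_charpoly_inv {K : Type*} [Field K] {A : Matrix n n K} (hA : IsUnit A)
    (hsplit : A.charpoly.Splits) : A⁻¹.charpoly.roots = A.charpoly.roots.map (·⁻¹) := by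
  have hdet : A.det ≠ 0 := ((isUnit_iff_isUnit_det A).mp hA).ne_zero
  have hcoeff : A.charpoly.coeff 0 ≠ 0 := fun h => hdet (by simp [det_eq_sign_charpoly_coeff, h])
  rw [charpoly_inv A hA, ← reverse_charpoly, ← C_1, ← C_neg, ← C_pow, ← C_mul,
    roots_C_mul _ (by simp [Ring.inverse_eq_inv', hdet]), roots_reverse hsplit hcoeff]

end Matrix

theorem even_card_charpoly_roots_rootOfUnity_of_preserves_form_general
    {K : Type*} [Field K] [IsAlgClosed K] {n : ℕ} (hn : Even n)
    (G A : Matrix (Fin n) (Fin n) K)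
    (hG : IsUnit G)
    (hA : Aᵀ * G * A = G) :
    Even (Multiset.card
      (A.charpoly.roots.filter fun α => ∃ k : ℕ, 0 < k ∧ α ^ k = 1)) := by
  simp_rw [← isOfFinOrder_iff_pow_eq_one]
  have hsplit : A.charpoly.Splits := IsAlgClosed.splits _
  have hAunit : IsUnit A := isUnit_of_transpose_mul_mul_eq hG hA
  have hinv : A.charpoly.roots.map (·⁻¹) = A.charpoly.roots := by
    rw [← roots_charpoly_inv hAunit hsplit,
      charpoly_inv_eq_charpoly_of_transpose_mul_mul_eq hG hA]
  have hzero : (0 : K) ∉ A.charpoly.roots := fun h =>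
    ((isUnit_iff_isUnit_det A).mp hAunit).ne_zero
      (by rw [det_eq_prod_roots_charpoly_of_splits hsplit]; exact Multiset.prod_eq_zero h)
  have hcard : Multiset.card (A.charpoly.roots.filter IsOfFinOrder) +
      Multiset.card (A.charpoly.roots.filter fun a => ¬IsOfFinOrder a) = n := by
    rw [← Multiset.card_add, Multiset.filter_add_not, ← hsplit.natDegree_eq_card_roots,
      charpoly_natDegree_eq_dim, Fintype.card_fin]
  rw [← hcard, Nat.even_add] at hn
  exact hn.mpr (Multiset.even_card_filter_not_isOfFinOrder hinv hzero)

/-- Over an algebraically closed field, if `n` is even and `A` preserves a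
nondegenerate symmetric bilinear form with Gram matrix `G`, then the number of
roots of `charpoly A` (counted with multiplicity) that are roots of unity is even. -/
theorem even_card_charpoly_roots_rootOfUnity_of_preserves_form
    {K : Type*} [Field K] [IsAlgClosed K] {n : ℕ} (hn : Even n)
    (G A : Matrix (Fin n) (Fin n) K)
    (hG : IsUnit G) (hGsymm : Gᵀ = G)
    (hA : Aᵀ * G * A = G) :
    Even (Multiset.card
      (A.charpoly.roots.filter fun α => ∃ k : ℕ, 0 < k ∧ α ^ k = 1)) :=
  even_card_charpoly_roots_rootOfUnity_of_preserves_form_general hn G A hG hA
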